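/- arXiv:2110.14453 — 2 statements merged into one kernel-verified Lean document; each statement's English description precedes it below -/
import Mathlib

section
/- Let G be a finite nonempty simple graph that is Type 1, i.e., χ_T(G) = Δ(G) + 1, and let H be a finite nonempty bipartite simple graph. Then the direct product G × H is Type 1, i.e., χ_T(G × H) = Δ(G × H) + 1. -/
open SimpleGraph

/-- Tensor (direct / categorical) product of simple graphs:
`(u, v)` is adjacent to `(u', v')` iff `u ~ u'` in `G` and `v ~ v'` in `H`. -/
def tensorProd {V W : Type*} (G : SimpleGraph V) (H : SimpleGraph W) :
    SimpleGraph (V × W) where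
  Adj x y := G.Adj x.1 y.1 ∧ H.Adj x.2 y.2
  symm := ⟨fun _ _ h => ⟨h.1.symm, h.2.symm⟩⟩
  loopless := ⟨fun x h => G.loopless.irrefl x.1 h.1⟩

instance {V W : Type*} (G : SimpleGraph V) (H : SimpleGraph W)
    [DecidableRel G.Adj] [DecidableRel H.Adj] : DecidableRel (tensorProd G H).Adj :=
  fun x y => inferInstanceAs (Decidable (G.Adj x.1 y.1 ∧ H.Adj x.2 y.2))

/-- `G` has a proper total coloring with `k` colors: adjacent vertices get distinct
colors, distinct incident edges get distinct colors, and each edge gets a color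
distinct from those of both of its endpoints. -/
def HasTotalColoring {V : Type*} (G : SimpleGraph V) (k : ℕ) : Prop :=
  ∃ (cv : V → Fin k) (ce : Sym2 V → Fin k),
    (∀ u v, G.Adj u v → cv u ≠ cv v) ∧
    (∀ u v w, G.Adj u v → G.Adj u w → v ≠ w → ce s(u, v) ≠ ce s(u, w)) ∧
    (∀ u v, G.Adj u v → ce s(u, v) ≠ cv u ∧ ce s(u, v) ≠ cv v)

/-- The total chromatic number: the least `k` such that `G` has a `k`-total coloring. -/
noncomputable def totalChromaticNumber {V : Type*} (G : SimpleGraph V) : ℕ :=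
  sInf {k | HasTotalColoring G k}

/-!
Colour each vertex `(u, w)` of `G × H` by the colour of `u` in a `(Δ(G) + 1)`-total colouring
of `G`. By König's theorem the bipartite graph `H` has a proper `Δ(H)`-edge-colouring; an edge of
`G × H` lying over the distinguished colour class of `H` (the class `none`) takes the colour of its
projection to `G`. Over any other colour class the edges of `G × H` map injectively at each vertex
into the bipartite double cover `G × K₂`, whose maximum degree is `Δ(G)`, so König's theorem again
colours them from a fresh palette of `Δ(G)` colours. Altogether
`(Δ(G) + 1) + (Δ(H) - 1) Δ(G) = Δ(G) Δ(H) + 1` colours are used, and no total colouring can use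
fewer than `Δ + 1`.

König's theorem is proved by completing the biadjacency matrix of the bipartite graph to a
nonnegative integer matrix with all line sums `k` and peeling off `k` permutations, each found by
Hall's theorem.
-/

open Finset

namespace SimpleGraph

variable {V α : Type*} {G : SimpleGraph V}

def IsProperEdgeColoring (G : SimpleGraph V) (c : Sym2 V → α) : Prop :=
  ∀ ⦃u v w⦄, G.Adj u v → G.Adj u w → v ≠ w → c s(u, v) ≠ c s(u, w)

structure IsTotalColoring (G : SimpleGraph V) (cv : V → α) (ce : Sym2 V → α) : Prop where
  adj : ∀ ⦃u v⦄, G.Adj u v → cv u ≠ cv v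
  edge : G.IsProperEdgeColoring ce
  incident : ∀ ⦃u v⦄, G.Adj u v → ce s(u, v) ≠ cv u

lemma IsProperEdgeColoring.eq_of_apply_eq {c : Sym2 V → α} (hc : G.IsProperEdgeColoring c)
    {u v w : V} (huv : G.Adj u v) (huw : G.Adj u w) (h : c s(u, v) = c s(u, w)) : v = w :=
  by_contra fun hvw => hc huv huw hvw h

lemma IsProperEdgeColoring.comp {β : Type*} {c : Sym2 V → α} (hc : G.IsProperEdgeColoring c)
    {f : α → β} (hf : f.Injective) : G.IsProperEdgeColoring (f ∘ c) :=
  fun _ _ _ huv huw hvw h => hc huv huw hvw (hf h)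

lemma IsTotalColoring.comp {β : Type*} {cv : V → α} {ce : Sym2 V → α}
    (h : G.IsTotalColoring cv ce) {f : α → β} (hf : f.Injective) :
    G.IsTotalColoring (f ∘ cv) (f ∘ ce) where
  adj _ _ huv := hf.ne (h.adj huv)
  edge := h.edge.comp hf
  incident _ _ huv := hf.ne (h.incident huv)

lemma IsTotalColoring.degree_lt_card [Fintype V] [DecidableRel G.Adj] [Fintype α]
    {cv : V → α} {ce : Sym2 V → α} (h : G.IsTotalColoring cv ce) (v : V) :
    G.degree v < Fintype.card α := by
  classical
  have hinj : Set.InjOn (fun w => ce s(v, w)) (G.neighborFinset v) := fun w hw w' hw' =>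
    h.edge.eq_of_apply_eq ((G.mem_neighborFinset v w).1 hw) ((G.mem_neighborFinset v w').1 hw')
  have hcv : cv v ∉ (G.neighborFinset v).image fun w => ce s(v, w) := by
    simp only [mem_image, mem_neighborFinset, not_exists, not_and]
    exact fun w hw => h.incident hw
  calc G.degree v < #(insert (cv v) ((G.neighborFinset v).image fun w => ce s(v, w))) := by
        rw [card_insert_of_notMem hcv, card_image_of_injOn hinj, card_neighborFinset_eq_degree]
        exact Nat.lt_succ_self _
    _ ≤ Fintype.card α := card_le_univ _

end SimpleGraph

section TotalColoring

variable {V α : Type*} {G : SimpleGraph V}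

lemma hasTotalColoring_iff {k : ℕ} :
    HasTotalColoring G k ↔ ∃ (cv : V → Fin k) (ce : Sym2 V → Fin k), G.IsTotalColoring cv ce := by
  constructor
  · rintro ⟨cv, ce, hadj, hedge, hinc⟩
    exact ⟨cv, ce, hadj, fun u v w => hedge u v w, fun u v huv => (hinc u v huv).1⟩
  · rintro ⟨cv, ce, h⟩
    refine ⟨cv, ce, fun u v => @h.adj u v, fun u v w => @h.edge u v w,
      fun u v huv => ⟨h.incident huv, ?_⟩⟩
    rw [Sym2.eq_swap]
    exact h.incident huv.symm

lemma SimpleGraph.IsTotalColoring.hasTotalColoring [Fintype α] {cv : V → α} {ce : Sym2 V → α}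
    (h : G.IsTotalColoring cv ce) {k : ℕ} (hk : Fintype.card α ≤ k) : HasTotalColoring G k := by
  obtain ⟨f⟩ := Function.Embedding.nonempty_of_card_le (hk.trans_eq (Fintype.card_fin k).symm)
  exact hasTotalColoring_iff.2 ⟨_, _, h.comp f.injective⟩

lemma HasTotalColoring.maxDegree_lt [Fintype V] [Nonempty V] [DecidableRel G.Adj] {k : ℕ}
    (h : HasTotalColoring G k) : G.maxDegree < k := by
  obtain ⟨cv, ce, h⟩ := hasTotalColoring_iff.1 h
  obtain ⟨v, hv⟩ := G.exists_maximal_degree_vertex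
  simpa [hv] using h.degree_lt_card v

lemma hasTotalColoring_one_of_maxDegree_eq_zero [Fintype V] [DecidableRel G.Adj]
    (h : G.maxDegree = 0) : HasTotalColoring G 1 := by
  obtain rfl := maxDegree_eq_zero_iff.1 h
  exact ⟨0, 0, by simp, by simp, by simp⟩

lemma hasTotalColoring_totalChromaticNumber (h : 0 < totalChromaticNumber G) :
    HasTotalColoring G (totalChromaticNumber G) :=
  Nat.sInf_mem (Nat.nonempty_of_pos_sInf h)

lemma totalChromaticNumber_eq_maxDegree_add_one [Fintype V] [Nonempty V] [DecidableRel G.Adj]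
    (h : HasTotalColoring G (G.maxDegree + 1)) : totalChromaticNumber G = G.maxDegree + 1 :=
  le_antisymm (Nat.sInf_le h)
    (HasTotalColoring.maxDegree_lt (Nat.sInf_mem (s := {k | HasTotalColoring G k}) ⟨_, h⟩))

end TotalColoring

section LineSums

variable {ι : Type*} [Fintype ι] {M : ι → ι → ℕ} {k : ℕ}

def HasLineSums (M : ι → ι → ℕ) (k : ℕ) : Prop :=
  (∀ i, ∑ j, M i j = k) ∧ ∀ j, ∑ i, M i j = k

lemma exists_le_hasLineSums (hrow : ∀ i, ∑ j, M i j ≤ k) (hcol : ∀ j, ∑ i, M i j ≤ k) :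
    ∃ M', M ≤ M' ∧ HasLineSums M' k := by
  classical
  induction hn : ∑ _i : ι, k - ∑ i, ∑ j, M i j using Nat.strong_induction_on
    generalizing M with
  | _ n ih =>
  have hswap : ∑ j, ∑ i, M i j = ∑ i, ∑ j, M i j := sum_comm
  have hle : ∑ i, ∑ j, M i j ≤ ∑ _i : ι, k := sum_le_sum fun i _ => hrow i
  by_cases hfull : ∑ i, ∑ j, M i j = ∑ _i : ι, k
  · exact ⟨M, le_rfl, fun i => (sum_eq_sum_iff_of_le fun i _ => hrow i).1 hfull i (mem_univ i),
      fun j => (sum_eq_sum_iff_of_le fun j _ => hcol j).1 (hswap.trans hfull) j (mem_univ j)⟩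
  -- a deficient row forces a deficient column; raise the entry where they cross
  have hlt := lt_of_le_of_ne hle hfull
  obtain ⟨i₀, -, hi₀⟩ := exists_lt_of_sum_lt hlt
  obtain ⟨j₀, -, hj₀⟩ := exists_lt_of_sum_lt (hswap ▸ hlt)
  let M₁ : ι → ι → ℕ := fun i j => M i j + if i = i₀ ∧ j = j₀ then 1 else 0
  have hrow₁ (i : ι) : ∑ j, M₁ i j = ∑ j, M i j + if i = i₀ then 1 else 0 := by
    simp [M₁, sum_add_distrib, ite_and]
  have hcol₁ (j : ι) : ∑ i, M₁ i j = ∑ i, M i j + if j = j₀ then 1 else 0 := by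
    simp [M₁, sum_add_distrib, ite_and]
  have htot₁ : ∑ i, ∑ j, M₁ i j = ∑ i, ∑ j, M i j + 1 := by
    simp [hrow₁, sum_add_distrib]
  have hdec : ∑ _i : ι, k - ∑ i, ∑ j, M₁ i j < n := by omega
  obtain ⟨M', hM₁, hM'⟩ := ih _ hdec
    (fun i => by rw [hrow₁]; split_ifs with h <;> [exact h ▸ hi₀; simpa using hrow i])
    (fun j => by rw [hcol₁]; split_ifs with h <;> [exact h ▸ hj₀; simpa using hcol j]) rfl
  exact ⟨M', le_trans (fun i j => Nat.le_add_right _ _) hM₁, hM'⟩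

lemma HasLineSums.exists_perm_pos (hM : HasLineSums M k) (hk : 0 < k) :
    ∃ σ : Equiv.Perm ι, ∀ i, 0 < M i (σ i) := by
  classical
  let S (i : ι) : Finset ι := {j | 0 < M i j}
  have hall (A : Finset ι) : #A ≤ #(A.biUnion S) := by
    have hrow (i : ι) : ∑ j ∈ S i, M i j = k :=
      (sum_filter_of_ne fun j _ h => Nat.pos_of_ne_zero h).trans (hM.1 i)
    refine Nat.le_of_mul_le_mul_left ?_ hk
    calc k * #A = ∑ i ∈ A, ∑ j ∈ S i, M i j := by simp [hrow, mul_comm]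
      _ ≤ ∑ i ∈ A, ∑ j ∈ A.biUnion S, M i j :=
        sum_le_sum fun i hi => sum_le_sum_of_subset (subset_biUnion_of_mem S hi)
      _ = ∑ j ∈ A.biUnion S, ∑ i ∈ A, M i j := sum_comm
      _ ≤ ∑ j ∈ A.biUnion S, ∑ i, M i j :=
        sum_le_sum fun j _ => sum_le_sum_of_subset (subset_univ A)
      _ = k * #(A.biUnion S) := by simp [hM.2, mul_comm]
  obtain ⟨g, hg, hgS⟩ := (all_card_le_biUnion_card_iff_exists_injective S).1 hall
  exact ⟨Equiv.ofBijective g (Finite.injective_iff_bijective.1 hg), fun i => by simpa [S] using hgS i⟩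

lemma HasLineSums.sub_perm [DecidableEq ι] (hM : HasLineSums M (k + 1)) {σ : Equiv.Perm ι}
    (hσ : ∀ i, 0 < M i (σ i)) : HasLineSums (fun i j => M i j - if σ i = j then 1 else 0) k := by
  have hle (i j : ι) : (if σ i = j then 1 else 0) ≤ M i j := by
    split_ifs with h
    · exact h ▸ hσ i
    · exact Nat.zero_le _
  constructor
  · intro i
    rw [sum_tsub_distrib _ fun j _ => hle i j, hM.1 i]
    simp
  · intro j
    rw [sum_tsub_distrib _ fun i _ => hle i j, hM.2 j]
    simp [← Equiv.eq_symm_apply]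

lemma HasLineSums.exists_perms_cover (hM : HasLineSums M k) :
    ∃ σ : Fin k → Equiv.Perm ι, ∀ i j, 0 < M i j → ∃ t, σ t i = j := by
  classical
  induction k generalizing M with
  | zero =>
    refine ⟨Fin.elim0, fun i j hij => absurd hij ?_⟩
    simpa using (sum_eq_zero_iff.1 (hM.1 i)) j (mem_univ j)
  | succ k ih =>
    obtain ⟨σ₀, hσ₀⟩ := hM.exists_perm_pos k.succ_pos
    obtain ⟨σ, hσ⟩ := ih (hM.sub_perm hσ₀)
    refine ⟨Fin.cons σ₀ σ, fun i j hij => ?_⟩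
    by_cases h : σ₀ i = j
    · exact ⟨0, h⟩
    · obtain ⟨t, ht⟩ := hσ i j (by simpa [h] using hij)
      exact ⟨t.succ, ht⟩

end LineSums

namespace SimpleGraph

variable {T : Type*} [Fintype T] {B : SimpleGraph T} [DecidableRel B.Adj]

lemma sum_ite_adj_and_le_degree (x : T) (p : T → Prop) [DecidablePred p] :
    ∑ y, (if B.Adj x y ∧ p y then 1 else 0) ≤ B.degree x := by
  classical
  rw [sum_boole, Nat.cast_id, ← card_neighborFinset_eq_degree, neighborFinset_eq_filter]
  exact card_le_card fun y => by simp +contextual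

theorem Coloring.exists_isProperEdgeColoring (b : B.Coloring (Fin 2)) {k : ℕ} (hk : 0 < k)
    (hdeg : ∀ v, B.degree v ≤ k) : ∃ c : Sym2 T → Fin k, B.IsProperEdgeColoring c := by
  classical
  let A : T → T → ℕ := fun x y => if B.Adj x y ∧ b x = 0 then 1 else 0
  obtain ⟨M, hAM, hM⟩ := exists_le_hasLineSums (M := A) (k := k)
    (fun x => (sum_ite_adj_and_le_degree x fun _ => b x = 0).trans (hdeg x))
    (fun y => by
      simpa only [A, B.adj_comm _ y] using (sum_ite_adj_and_le_degree y (b · = 0)).trans (hdeg y))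
  obtain ⟨σ, hσ⟩ := hM.exists_perms_cover
  -- an edge is coloured by a permutation sending its end in class `0` to its end in class `1`
  let c (e : Sym2 T) : Fin k :=
    if h : ∃ t x y, e = s(x, y) ∧ b x = 0 ∧ σ t x = y then h.choose else ⟨0, hk⟩
  have hc {x y : T} (hxy : B.Adj x y) (hx : b x = 0) : σ (c s(x, y)) x = y := by
    obtain ⟨t, ht⟩ := hσ x y ((show 0 < A x y by simp [A, hxy, hx]).trans_le (hAM x y))
    have h : ∃ t x' y', s(x, y) = s(x', y') ∧ b x' = 0 ∧ σ t x' = y' := ⟨t, x, y, rfl, hx, ht⟩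
    obtain ⟨x', y', he, hx', hσt⟩ := h.choose_spec
    simp only [c, dif_pos h]
    rcases Sym2.eq_iff.1 he with ⟨rfl, rfl⟩ | ⟨rfl, rfl⟩
    · exact hσt
    · exact absurd (hx.trans hx'.symm) (b.valid hxy)
  have hb {x y : T} (hxy : B.Adj x y) (hx : b x ≠ 0) : b y = 0 := by
    have := b.valid hxy
    omega
  refine ⟨c, fun u v w huv huw hvw heq => hvw ?_⟩
  by_cases hu : b u = 0
  · rw [← hc huv hu, ← hc huw hu, heq]
  · have hv : σ (c s(u, v)) v = u := by
      rw [Sym2.eq_swap]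
      exact hc huv.symm (hb huv hu)
    have hw : σ (c s(u, v)) w = u := by
      rw [heq, Sym2.eq_swap]
      exact hc huw.symm (hb huw hu)
    exact (σ _).injective (hv.trans hw.symm)

end SimpleGraph

section TensorProduct

variable {V W : Type*} (G : SimpleGraph V) (H : SimpleGraph W)

lemma tensorProd_degree [Fintype V] [Fintype W] [DecidableRel G.Adj] [DecidableRel H.Adj]
    (x : V × W) : (tensorProd G H).degree x = G.degree x.1 * H.degree x.2 := by
  have : (tensorProd G H).neighborFinset x = G.neighborFinset x.1 ×ˢ H.neighborFinset x.2 := by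
    ext y
    simp only [mem_neighborFinset, mem_product]
    rfl
  rw [← card_neighborFinset_eq_degree, this, card_product, card_neighborFinset_eq_degree,
    card_neighborFinset_eq_degree]

lemma tensorProd_maxDegree [Fintype V] [Fintype W] [Nonempty V] [Nonempty W]
    [DecidableRel G.Adj] [DecidableRel H.Adj] :
    (tensorProd G H).maxDegree = G.maxDegree * H.maxDegree := by
  refine le_antisymm (maxDegree_le_of_forall_degree_le _ _ fun x => ?_) ?_
  · rw [tensorProd_degree]
    exact Nat.mul_le_mul (G.degree_le_maxDegree x.1) (H.degree_le_maxDegree x.2)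
  · obtain ⟨u, hu⟩ := G.exists_maximal_degree_vertex
    obtain ⟨w, hw⟩ := H.exists_maximal_degree_vertex
    simpa [hu, hw, tensorProd_degree] using (tensorProd G H).degree_le_maxDegree (u, w)

variable {G H} {α β γ : Type*}

def tensorEdgeColor (b : W → Fin 2) (ceG : Sym2 V → α) (eH : Sym2 W → Option β)
    (cD : Sym2 (V × Fin 2) → γ) (e : Sym2 (V × W)) : α ⊕ β × γ :=
  match eH (e.map Prod.snd) with
  | none => .inl (ceG (e.map Prod.fst))
  | some j => .inr (j, cD (e.map (Prod.map id b)))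

lemma SimpleGraph.IsTotalColoring.tensorProd {cvG : V → α} {ceG : Sym2 V → α}
    (hG : G.IsTotalColoring cvG ceG) {eH : Sym2 W → Option β} (hH : H.IsProperEdgeColoring eH)
    (b : H.Coloring (Fin 2)) {cD : Sym2 (V × Fin 2) → γ}
    (hD : (tensorProd G ⊤).IsProperEdgeColoring cD) :
    (tensorProd G H).IsTotalColoring (fun x => .inl (cvG x.1)) (tensorEdgeColor b ceG eH cD) where
  adj _ _ huv := by simpa using hG.adj huv.1
  edge u v w huv huw hvw heq := by
    have hne (h : eH s(u.2, v.2) = eH s(u.2, w.2)) : v.1 ≠ w.1 := fun h₁ =>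
      hvw (Prod.ext h₁ (hH.eq_of_apply_eq huv.2 huw.2 h))
    simp only [tensorEdgeColor, Sym2.map_mk] at heq
    cases hv : eH s(u.2, v.2) <;> cases hw : eH s(u.2, w.2) <;>
      simp only [hv, hw, reduceCtorEq, Sum.inl.injEq, Sum.inr.injEq, Prod.mk.injEq] at heq
    · exact hG.edge huv.1 huw.1 (hne (hv.trans hw.symm)) heq
    · obtain ⟨rfl, heq⟩ := heq
      exact hD ⟨huv.1, b.valid huv.2⟩ ⟨huw.1, b.valid huw.2⟩
        (fun h => hne (hv.trans hw.symm) (Prod.ext_iff.1 h).1) heq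
  incident u v huv := by
    simp only [tensorEdgeColor, Sym2.map_mk]
    cases eH s(u.2, v.2)
    · simpa using hG.incident huv.1
    · simp

end TensorProduct

theorem hasTotalColoring_tensorProd {V W : Type*} [Fintype V] [Fintype W]
    {G : SimpleGraph V} {H : SimpleGraph W} [DecidableRel G.Adj] [DecidableRel H.Adj]
    (hG : HasTotalColoring G (G.maxDegree + 1)) (b : H.Coloring (Fin 2))
    (hm : 0 < G.maxDegree) (hd : 0 < H.maxDegree) :
    HasTotalColoring (tensorProd G H) (G.maxDegree * H.maxDegree + 1) := by
  obtain ⟨cvG, ceG, hGc⟩ := hasTotalColoring_iff.1 hG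
  obtain ⟨d, hd⟩ := Nat.exists_eq_add_one.2 hd
  obtain ⟨eH, heH⟩ := b.exists_isProperEdgeColoring (k := d + 1) d.succ_pos fun w =>
    hd ▸ H.degree_le_maxDegree w
  let bD : (tensorProd G ⊤).Coloring (Fin 2) := Coloring.mk Prod.snd fun h => h.2
  obtain ⟨cD, hcD⟩ := bD.exists_isProperEdgeColoring hm fun x => by
    simpa [tensorProd_degree] using G.degree_le_maxDegree x.1
  refine (hGc.tensorProd (heH.comp (finSuccEquiv d).injective) b hcD).hasTotalColoring ?_
  simp only [Fintype.card_sum, Fintype.card_prod, Fintype.card_fin, hd]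
  exact le_of_eq (by ring)

theorem type1_tensor_bipartite {V W : Type*} [Fintype V] [Fintype W]
    [Nonempty V] [Nonempty W]
    (G : SimpleGraph V) (H : SimpleGraph W) [DecidableRel G.Adj] [DecidableRel H.Adj]
    (hG : totalChromaticNumber G = G.maxDegree + 1)
    (hH : H.Colorable 2) :
    totalChromaticNumber (tensorProd G H) = (tensorProd G H).maxDegree + 1 := by
  have hGcol : HasTotalColoring G (G.maxDegree + 1) :=
    hG ▸ hasTotalColoring_totalChromaticNumber (by omega)
  refine totalChromaticNumber_eq_maxDegree_add_one ?_
  rcases Nat.eq_zero_or_pos (tensorProd G H).maxDegree with h₀ | hpos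
  · rw [h₀]
    exact hasTotalColoring_one_of_maxDegree_eq_zero h₀
  rw [tensorProd_maxDegree] at hpos ⊢
  obtain ⟨hm, hd⟩ := CanonicallyOrderedAdd.mul_pos.1 hpos
  exact hasTotalColoring_tensorProd hGcol hH.some hm hd
end

section
/- For every integer n ≥ 3, the direct product of cycle graphs C_12 × C_n has total chromatic number 5. -/
open SimpleGraph

/-!
Every vertex of `C_m × C_n` (`m, n ≥ 3`) has degree 4, and a vertex together with its incident
edges needs pairwise distinct colours, so at least 5 colours are necessary. When `6 ∣ m` five
suffice: colour the vertex `(i, v)` by `i mod 3`. An edge between columns `i` and `i + 1` is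
rising if the second coordinate also increases by one along it, falling otherwise; rising
edges get the colour in `{0, 1, 2}` used by neither column, falling ones get `3` or `4`
according to the parity of `i`. All constraints at a vertex then depend only on its column
modulo 6, where they are a finite check.
-/

theorem HasTotalColoring.degree_lt {V : Type*} {G : SimpleGraph V} {k : ℕ}
    (h : HasTotalColoring G k) (v : V) [Fintype (G.neighborSet v)] : G.degree v < k := by
  obtain ⟨cv, ce, -, hinc, hend⟩ := h
  let edgeAt : G.neighborSet v → {c : Fin k // c ≠ cv v} := fun w =>
    ⟨ce s(v, w), (hend v w w.2).1⟩
  have hinj : Function.Injective edgeAt := fun w w' hww' => by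
    by_contra hne
    exact hinc v w w' w.2 w'.2 (Subtype.coe_ne_coe.mpr hne) (congrArg Subtype.val hww')
  calc G.degree v = Fintype.card (G.neighborSet v) := (card_neighborSet_eq_degree G v).symm
    _ ≤ Fintype.card {c : Fin k // c ≠ cv v} := Fintype.card_le_of_injective edgeAt hinj
    _ < Fintype.card (Fin k) := Fintype.card_subtype_lt (x := cv v) (not_not.mpr rfl)
    _ = k := Fintype.card_fin k

theorem tensorProd_degree_s9 {V W : Type*} (G : SimpleGraph V) (H : SimpleGraph W) (u : V) (v : W)
    [Fintype (G.neighborSet u)] [Fintype (H.neighborSet v)]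
    [Fintype ((tensorProd G H).neighborSet (u, v))] :
    (tensorProd G H).degree (u, v) = G.degree u * H.degree v := by
  simp only [← card_neighborSet_eq_degree, ← Fintype.card_prod]
  exact Fintype.card_congr Equiv.subtypeProdEquivProd

theorem cycleGraph_degree_eq_two {n : ℕ} (hn : 3 ≤ n) (v : Fin n) :
    (cycleGraph n).degree v = 2 := by
  obtain ⟨k, rfl⟩ := Nat.exists_eq_add_of_le' hn
  exact cycleGraph_degree_three_le

section Cycle

variable {n : ℕ} [NeZero n] {v w w' : Fin n}

theorem cycleGraph_adj_eq_add_one_or (h : (cycleGraph n).Adj v w) : w = v + 1 ∨ v = w + 1 := by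
  obtain ⟨k, rfl⟩ : ∃ k, n = k + 1 := Nat.exists_eq_succ_of_ne_zero (NeZero.ne n)
  cases k with
  | zero => exact absurd h cycleGraph_one_adj
  | succ k =>
    rw [cycleGraph_adj, sub_eq_iff_eq_add, sub_eq_iff_eq_add] at h
    exact h.symm.imp (fun h => h.trans (add_comm _ _)) (fun h => h.trans (add_comm _ _))

theorem cycleGraph_eq_of_adj_of_adj_of_forward (hw : (cycleGraph n).Adj v w)
    (hw' : (cycleGraph n).Adj v w') (h : w = v + 1 ↔ w' = v + 1) : w = w' := by
  grind [cycleGraph_adj_eq_add_one_or hw, cycleGraph_adj_eq_add_one_or hw']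

theorem cycleGraph_eq_of_adj_of_adj_of_backward (hw : (cycleGraph n).Adj v w)
    (hw' : (cycleGraph n).Adj v w') (h : v = w + 1 ↔ v = w' + 1) : w = w' := by
  grind [cycleGraph_adj_eq_add_one_or hw, cycleGraph_adj_eq_add_one_or hw']

end Cycle

theorem Fin.natCast_val_add_one {m d : ℕ} [NeZero m] (h : d ∣ m) (i : Fin m) :
    (((i + 1 : Fin m) : ℕ) : ZMod d) = ((i : ℕ) : ZMod d) + 1 := by
  rw [← Nat.cast_add_one, ZMod.natCast_eq_natCast_iff', Fin.val_add, Fin.val_one',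
    Nat.mod_mod_of_dvd _ h, Nat.add_mod, Nat.mod_mod_of_dvd _ h, ← Nat.add_mod]

namespace CycleTensorCycleColoring

def columnColor (p : ZMod 6) : Fin 5 := ⟨p.val % 3, by omega⟩

def crossingColor (p : ZMod 6) (rising : Bool) : Fin 5 :=
  if rising then ⟨(p.val + 2) % 3, by omega⟩ else ⟨3 + p.val % 2, by omega⟩

def aroundColor (p : ZMod 6) (s : Bool × Bool) : Fin 5 :=
  crossingColor (if s.1 then p else p - 1) s.2

theorem columnColor_add_one_ne : ∀ p : ZMod 6, columnColor (p + 1) ≠ columnColor p := by decide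

theorem aroundColor_ne_columnColor : ∀ p s, aroundColor p s ≠ columnColor p := by decide

theorem aroundColor_injective : ∀ p, Function.Injective (aroundColor p) := by decide

theorem add_one_add_one_ne_self : ∀ p : ZMod 6, p + 1 + 1 ≠ p := by decide

variable {m n : ℕ} [NeZero m] [NeZero n]

def phase (i : Fin m) : ZMod 6 := (i : ℕ)

theorem phase_add_one (hm : 6 ∣ m) (i : Fin m) : phase (i + 1) = phase i + 1 :=
  Fin.natCast_val_add_one hm i

theorem ne_add_one_of_eq_add_one (hm : 6 ∣ m) {i j : Fin m} (h : j = i + 1) : i ≠ j + 1 := by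
  intro h'
  apply add_one_add_one_ne_self (phase i)
  rw [← phase_add_one hm, ← phase_add_one hm, ← h, ← h']

def edgeColor (x y : Fin m × Fin n) : Fin 5 :=
  if y.1 = x.1 + 1 then crossingColor (phase x.1) (y.2 = x.2 + 1)
  else if x.1 = y.1 + 1 then crossingColor (phase y.1) (x.2 = y.2 + 1)
  else 0

theorem edgeColor_comm (hm : 6 ∣ m) (x y : Fin m × Fin n) : edgeColor x y = edgeColor y x := by
  unfold edgeColor
  by_cases hf : y.1 = x.1 + 1
  · rw [if_pos hf, if_neg (ne_add_one_of_eq_add_one hm hf), if_pos hf]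
  · by_cases hb : x.1 = y.1 + 1
    · rw [if_neg hf, if_pos hb, if_pos hb]
    · rw [if_neg hf, if_neg hb, if_neg hb, if_neg hf]

/-- Which of the (at most) four edges at `x` the edge `xy` is: towards column `x.1 + 1` or
`x.1 - 1`, and rising or falling. -/
def slot (x y : Fin m × Fin n) : Bool × Bool :=
  if y.1 = x.1 + 1 then (true, y.2 = x.2 + 1) else (false, x.2 = y.2 + 1)

theorem edgeColor_eq_aroundColor (hm : 6 ∣ m) {x y : Fin m × Fin n}
    (h : (cycleGraph m).Adj x.1 y.1) : edgeColor x y = aroundColor (phase x.1) (slot x y) := by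
  unfold edgeColor slot
  by_cases hf : y.1 = x.1 + 1
  · rw [if_pos hf, if_pos hf]
    rfl
  · have hb : x.1 = y.1 + 1 := (cycleGraph_adj_eq_add_one_or h).resolve_left hf
    rw [if_neg hf, if_pos hb, if_neg hf, hb, phase_add_one hm]
    simp [aroundColor]

theorem slot_injective {x y z : Fin m × Fin n}
    (hy : (tensorProd (cycleGraph m) (cycleGraph n)).Adj x y)
    (hz : (tensorProd (cycleGraph m) (cycleGraph n)).Adj x z) (h : slot x y = slot x z) :
    y = z := by
  obtain ⟨hy₁, hy₂⟩ := hy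
  obtain ⟨hz₁, hz₂⟩ := hz
  unfold slot at h
  by_cases hfy : y.1 = x.1 + 1 <;> by_cases hfz : z.1 = x.1 + 1 <;>
    simp only [hfy, hfz, ↓reduceIte, Prod.mk.injEq, decide_eq_decide, true_and, false_and,
      Bool.true_eq_false, Bool.false_eq_true] at h
  · exact Prod.ext (hfy.trans hfz.symm) (cycleGraph_eq_of_adj_of_adj_of_forward hy₂ hz₂ h)
  · have hby := (cycleGraph_adj_eq_add_one_or hy₁).resolve_left hfy
    have hbz := (cycleGraph_adj_eq_add_one_or hz₁).resolve_left hfz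
    exact Prod.ext (add_right_cancel (hby.symm.trans hbz))
      (cycleGraph_eq_of_adj_of_adj_of_backward hy₂ hz₂ h)

theorem hasTotalColoring_five (hm : 6 ∣ m) :
    HasTotalColoring (tensorProd (cycleGraph m) (cycleGraph n)) 5 := by
  have edge_ne_vertex : ∀ x y, (tensorProd (cycleGraph m) (cycleGraph n)).Adj x y →
      edgeColor x y ≠ columnColor (phase x.1) := fun x y h => by
    rw [edgeColor_eq_aroundColor hm h.1]
    exact aroundColor_ne_columnColor _ _
  refine ⟨fun x => columnColor (phase x.1), Sym2.lift ⟨edgeColor, edgeColor_comm hm⟩,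
    ?_, ?_, ?_⟩
  · rintro x y ⟨h, -⟩
    show columnColor (phase x.1) ≠ columnColor (phase y.1)
    rcases cycleGraph_adj_eq_add_one_or h with h | h
    · rw [h, phase_add_one hm]
      exact (columnColor_add_one_ne _).symm
    · rw [h, phase_add_one hm]
      exact columnColor_add_one_ne _
  · intro x y z hy hz hyz heq
    simp only [Sym2.lift_mk, edgeColor_eq_aroundColor hm hy.1,
      edgeColor_eq_aroundColor hm hz.1] at heq
    exact hyz (slot_injective hy hz (aroundColor_injective _ heq))
  · intro x y h
    simp only [Sym2.lift_mk]
    exact ⟨edge_ne_vertex x y h, edgeColor_comm hm x y ▸ edge_ne_vertex y x h.symm⟩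

end CycleTensorCycleColoring

theorem c12_tensor_cn (n : ℕ) (hn : 3 ≤ n) :
    totalChromaticNumber (tensorProd (cycleGraph 12) (cycleGraph n)) = 5 := by
  have : NeZero n := ⟨by omega⟩
  have hcol : HasTotalColoring (tensorProd (cycleGraph 12) (cycleGraph n)) 5 :=
    CycleTensorCycleColoring.hasTotalColoring_five (by norm_num)
  refine le_antisymm (Nat.sInf_le hcol) (le_csInf ⟨5, hcol⟩ fun k hk => ?_)
  have hdeg := hk.degree_lt (0, 0)
  rwa [tensorProd_degree_s9, cycleGraph_degree_eq_two (by norm_num), cycleGraph_degree_eq_two hn]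
    at hdeg
end
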